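/- arXiv:math/0405258 — 3 statements merged into one kernel-verified Lean document; each statement's English description precedes it below -/
import Mathlib

section
/- If π ∈ S_{m+n} is annular non-crossing (connected with |π| + |γ_{m,n} π^{-1}| = m + n), then γ_{m,n} π^{-1} is also annular non-crossing. -/
/-- The minimal number of transpositions needed to write `π` as a product of transpositions. -/
noncomputable def transLength {N : ℕ} (π : Equiv.Perm (Fin N)) : ℕ :=
  sInf {k | ∃ l : List (Equiv.Perm (Fin N)),
    (∀ τ ∈ l, τ.IsSwap) ∧ l.prod = π ∧ l.length = k}

/-- The permutation `γ_{m,n} = (1,…,m)(m+1,…,m+n)` of `{1,…,m+n}`. -/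
def gammaMN (m n : ℕ) : Equiv.Perm (Fin (m + n)) :=
  finSumFinEquiv.permCongr ((finRotate m).sumCongr (finRotate n))

/-- `π` is `(m,n)`-connected: `π` and `γ_{m,n}` generate a transitive subgroup. -/
def Connected {m n : ℕ} (π : Equiv.Perm (Fin (m + n))) : Prop :=
  ∀ x y : Fin (m + n),
    ∃ g ∈ Subgroup.closure ({π, gammaMN m n} : Set (Equiv.Perm (Fin (m + n)))), g x = y

/-- `π` is `(m,n)`-annular non-crossing: connected and `|π| + |γ_{m,n} π⁻¹| = m + n`. -/
def AnnularNonCrossing {m n : ℕ} (π : Equiv.Perm (Fin (m + n))) : Prop :=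
  Connected π ∧ transLength π + transLength (gammaMN m n * π⁻¹) = m + n

/-- Conjugation of a transposition is a transposition (explicit form). -/
lemma conj_swap {N : ℕ} (τ : Equiv.Perm (Fin N)) (a b : Fin N) :
    τ * Equiv.swap a b * τ⁻¹ = Equiv.swap (τ a) (τ b) := by
  ext x
  simp only [Equiv.swap_apply_def, Equiv.Perm.mul_apply]
  split_ifs with h1 h2 h3 h4 h5 <;>
    simp_all [Equiv.Perm.inv_eq_iff_eq, ← Equiv.Perm.eq_inv_iff_eq]

/-- Conjugating maps swap factorizations to swap factorizations of the same length. -/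
lemma transSet_subset {N : ℕ} (τ π : Equiv.Perm (Fin N)) :
    {k | ∃ l : List (Equiv.Perm (Fin N)),
      (∀ σ ∈ l, σ.IsSwap) ∧ l.prod = π ∧ l.length = k} ⊆
    {k | ∃ l : List (Equiv.Perm (Fin N)),
      (∀ σ ∈ l, σ.IsSwap) ∧ l.prod = τ * π * τ⁻¹ ∧ l.length = k} := by
  rintro k ⟨l, hswap, hprod, hlen⟩
  refine ⟨l.map (fun s => τ * s * τ⁻¹), ?_, ?_, by simp [hlen]⟩
  · intro σ hσ
    simp only [List.mem_map] at hσ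
    obtain ⟨s, hs, rfl⟩ := hσ
    obtain ⟨a, b, hab, rfl⟩ := hswap s hs
    exact ⟨τ a, τ b, by simp [hab], conj_swap τ a b⟩
  · have : (fun s => τ * s * τ⁻¹) = ⇑(MulAut.conj τ).toMonoidHom := rfl
    rw [this, ← map_list_prod, hprod]
    rfl

/-- `transLength` is invariant under conjugation. -/
lemma transLength_conj {N : ℕ} (τ π : Equiv.Perm (Fin N)) :
    transLength (τ * π * τ⁻¹) = transLength π := by
  unfold transLength
  congr 1
  apply Set.Subset.antisymm _ (transSet_subset τ π)
  have := transSet_subset τ⁻¹ (τ * π * τ⁻¹)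
  simpa [mul_assoc] using this

/-- `π, γ` and `γπ⁻¹, γ` generate the same subgroup. -/
lemma closure_eq_aux {m n : ℕ} (π : Equiv.Perm (Fin (m + n))) :
    Subgroup.closure ({gammaMN m n * π⁻¹, gammaMN m n} : Set (Equiv.Perm (Fin (m + n)))) =
    Subgroup.closure ({π, gammaMN m n} : Set (Equiv.Perm (Fin (m + n)))) := by
  apply le_antisymm <;> rw [Subgroup.closure_le] <;> rintro x hx <;>
      rcases hx with h | h <;> subst h
  · exact mul_mem (Subgroup.subset_closure (by simp))
      (inv_mem (Subgroup.subset_closure (by simp)))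
  · exact Subgroup.subset_closure (by simp)
  · have hπ : x = (gammaMN m n * x⁻¹)⁻¹ * gammaMN m n := by group
    nth_rewrite 2 [hπ]
    exact mul_mem (inv_mem (Subgroup.subset_closure (by simp)))
      (Subgroup.subset_closure (by simp))
  · exact Subgroup.subset_closure (by simp)

theorem annularNonCrossing_complement {m n : ℕ} (π : Equiv.Perm (Fin (m + n)))
    (h : AnnularNonCrossing π) :
    AnnularNonCrossing (gammaMN m n * π⁻¹) := by
  obtain ⟨hc, hl⟩ := h
  constructor
  · intro x y
    obtain ⟨g, hg, hgx⟩ := hc x y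
    exact ⟨g, by rw [closure_eq_aux]; exact hg, hgx⟩
  · have key : gammaMN m n * (gammaMN m n * π⁻¹)⁻¹ = gammaMN m n * π * (gammaMN m n)⁻¹ := by
      group
    rw [key, transLength_conj, Nat.add_comm]
    exact hl
end

section
/- With notation as above, for π ∈ S^{(ε)}_{2l} define π̃ ∈ S_l by π²(p_k) = p_{π̃(k)}. Then the number of cycles of π equals the number of cycles of π̃, and hence |π| = |π̃| + l. -/
/-- The number of cycles of `π`, counting fixed points as cycles. -/
def numCycles {N : ℕ} (π : Equiv.Perm (Fin N)) : ℕ :=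
  π.cycleType.card + (Finset.univ.filter fun x => π x = x).card

namespace Finset

theorem card_image_eq_card_image_of_eq_iff {ι β γ : Type*} [DecidableEq β]
    [DecidableEq γ] {s : Finset ι} {f : ι → β} {g : ι → γ}
    (h : ∀ x ∈ s, ∀ y ∈ s, f x = f y ↔ g x = g y) : #(s.image f) = #(s.image g) := by
  set P := s.image fun x => (f x, g x)
  have hfst : P.image Prod.fst = s.image f := by simp only [P, image_image]; rfl
  have hsnd : P.image Prod.snd = s.image g := by simp only [P, image_image]; rfl
  rw [← hfst, ← hsnd, card_image_of_injOn (f := Prod.fst),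
    card_image_of_injOn (f := Prod.snd)] <;>
  · rintro _ hu _ hv huv
    obtain ⟨x, hx, rfl⟩ := mem_image.1 hu
    obtain ⟨y, hy, rfl⟩ := mem_image.1 hv
    simp_all

end Finset

section

open Finset Function

namespace Equiv.Perm

section Orbits

variable {α : Type*} [Fintype α] [DecidableEq α]

def orbit (σ : Perm α) (x : α) : Finset α := {y | σ.SameCycle x y}

def orbits (σ : Perm α) : Finset (Finset α) := univ.image σ.orbit

variable {σ : Perm α} {a b x y : α}

@[simp] theorem mem_orbit : y ∈ σ.orbit x ↔ σ.SameCycle x y := by simp [orbit]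

theorem orbit_eq_orbit_iff : σ.orbit x = σ.orbit y ↔ σ.SameCycle x y := by
  refine ⟨fun h => mem_orbit.1 (h ▸ mem_orbit.2 (SameCycle.refl _ _)), fun h => ?_⟩
  ext z
  simp only [mem_orbit]
  exact ⟨h.symm.trans, h.trans⟩

theorem orbit_mem_orbits (σ : Perm α) (x : α) : σ.orbit x ∈ σ.orbits :=
  mem_image_of_mem _ (mem_univ x)

theorem card_orbits_one : #(1 : Perm α).orbits = Fintype.card α := by
  rw [orbits, card_image_of_injective _ fun x y h => sameCycle_one.1 (orbit_eq_orbit_iff.1 h),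
    card_univ]

theorem sameCycle_swap_mul_of_not_sameCycle (ha : ¬σ.SameCycle x a) (hb : ¬σ.SameCycle x b)
    (h : σ.SameCycle x y) : (swap a b * σ).SameCycle x y := by
  have hpow : ∀ n : ℕ, ((swap a b * σ) ^ n) x = (σ ^ n) x := by
    intro n
    induction n with
    | zero => rfl
    | succ n ih =>
      have hna : (σ ^ (n + 1)) x ≠ a := fun h => ha (h ▸ sameCycle_pow_right.2 (.refl _ _))
      have hnb : (σ ^ (n + 1)) x ≠ b := fun h => hb (h ▸ sameCycle_pow_right.2 (.refl _ _))
      rw [pow_succ', mul_apply, ih, mul_apply, ← mul_apply σ, ← pow_succ',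
        swap_apply_of_ne_of_ne hna hnb]
  obtain ⟨n, rfl⟩ := h.exists_nat_pow_eq
  exact ⟨n, by rw [zpow_natCast, hpow]⟩

theorem sameCycle_swap_mul_or_of_sameCycle_or (h : σ.SameCycle x a ∨ σ.SameCycle x b) :
    (swap a b * σ).SameCycle x a ∨ (swap a b * σ).SameCycle x b := by
  obtain ⟨n, hn⟩ : ∃ n : ℕ, (σ ^ n) x = a ∨ (σ ^ n) x = b := by
    rcases h with h | h
    · obtain ⟨n, hn⟩ := h.exists_nat_pow_eq
      exact ⟨n, .inl hn⟩
    · obtain ⟨n, hn⟩ := h.exists_nat_pow_eq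
      exact ⟨n, .inr hn⟩
  clear h
  -- Until `σ` first reaches `a` or `b`, `swap a b * σ` follows it, and then jumps to the other.
  induction n generalizing x with
  | zero =>
    rw [pow_zero, one_apply] at hn
    rcases hn with rfl | rfl
    exacts [.inl (.refl _ _), .inr (.refl _ _)]
  | succ n ih =>
    rw [pow_succ, mul_apply] at hn
    have hstep : (swap a b * σ).SameCycle x (swap a b (σ x)) := by
      simpa using (SameCycle.refl (swap a b * σ) x).apply_right
    by_cases hxa : σ x = a
    · right; simpa [hxa] using hstep
    by_cases hxb : σ x = b
    · left; simpa [hxb] using hstep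
    rw [swap_apply_of_ne_of_ne hxa hxb] at hstep
    exact (ih hn).imp hstep.trans hstep.trans

theorem sameCycle_swap_mul_or_iff :
    (swap a b * σ).SameCycle x a ∨ (swap a b * σ).SameCycle x b ↔
      σ.SameCycle x a ∨ σ.SameCycle x b := by
  refine ⟨fun h => ?_, sameCycle_swap_mul_or_of_sameCycle_or⟩
  simpa only [swap_mul_self_mul] using sameCycle_swap_mul_or_of_sameCycle_or (σ := swap a b * σ) h

theorem orbit_swap_mul_of_not_sameCycle (ha : ¬σ.SameCycle x a) (hb : ¬σ.SameCycle x b) :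
    (swap a b * σ).orbit x = σ.orbit x := by
  obtain ⟨ha', hb'⟩ := not_or.1 <| sameCycle_swap_mul_or_iff.not.2 (not_or.2 ⟨ha, hb⟩)
  ext y
  simp only [mem_orbit]
  refine ⟨fun h => ?_, sameCycle_swap_mul_of_not_sameCycle ha hb⟩
  simpa only [swap_mul_self_mul] using sameCycle_swap_mul_of_not_sameCycle ha' hb' h

theorem mem_orbits_sdiff_iff {C : Finset α} :
    C ∈ σ.orbits \ {σ.orbit a, σ.orbit b} ↔
      ∃ x, ¬σ.SameCycle x a ∧ ¬σ.SameCycle x b ∧ σ.orbit x = C := by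
  simp only [orbits, mem_sdiff, mem_image, mem_univ, true_and, mem_insert, mem_singleton]
  constructor
  · rintro ⟨⟨x, rfl⟩, hx⟩
    simp only [orbit_eq_orbit_iff, not_or] at hx
    exact ⟨x, hx.1, hx.2, rfl⟩
  · rintro ⟨x, hxa, hxb, rfl⟩
    simp only [orbit_eq_orbit_iff, not_or]
    exact ⟨⟨x, .refl _ _⟩, hxa, hxb⟩

theorem card_orbits_add_card_orbit_pair_swap_mul (σ : Perm α) (a b : α) :
    #σ.orbits + #{(swap a b * σ).orbit a, (swap a b * σ).orbit b} =
      #(swap a b * σ).orbits + #{σ.orbit a, σ.orbit b} := by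
  have hrest : σ.orbits \ {σ.orbit a, σ.orbit b} =
      (swap a b * σ).orbits \ {(swap a b * σ).orbit a, (swap a b * σ).orbit b} := by
    ext C
    rw [mem_orbits_sdiff_iff, mem_orbits_sdiff_iff]
    refine exists_congr fun x => ?_
    rw [← and_assoc, ← and_assoc, ← not_or, ← not_or, sameCycle_swap_mul_or_iff]
    refine and_congr_right fun h => ?_
    rw [not_or] at h
    rw [orbit_swap_mul_of_not_sameCycle h.1 h.2]
  have hsub (τ : Perm α) : {τ.orbit a, τ.orbit b} ⊆ τ.orbits :=
    insert_subset (orbit_mem_orbits _ _) (singleton_subset_iff.2 (orbit_mem_orbits _ _))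
  rw [← card_sdiff_add_card_eq_card (hsub σ), ← card_sdiff_add_card_eq_card (hsub (swap a b * σ)),
    hrest]
  omega

theorem card_orbits_le_card_orbits_swap_mul_add_one (σ : Perm α) (a b : α) :
    #σ.orbits ≤ #(swap a b * σ).orbits + 1 := by
  have := card_orbits_add_card_orbit_pair_swap_mul σ a b
  have : 0 < #{(swap a b * σ).orbit a, (swap a b * σ).orbit b} := card_pos.2 (insert_nonempty _ _)
  have : #{σ.orbit a, σ.orbit b} ≤ 2 := card_le_two
  omega

theorem card_orbits_swap_apply_mul (hx : σ x ≠ x) :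
    #(swap x (σ x) * σ).orbits = #σ.orbits + 1 := by
  have := card_orbits_add_card_orbit_pair_swap_mul σ x (σ x)
  have : #{σ.orbit x, σ.orbit (σ x)} = 1 := by
    rw [orbit_eq_orbit_iff.2 (SameCycle.refl σ x).apply_right]
    simp
  have : #{(swap x (σ x) * σ).orbit x, (swap x (σ x) * σ).orbit (σ x)} = 2 := by
    refine card_pair fun h => hx ?_
    have hfix : IsFixedPt (swap x (σ x) * σ) x := by simp [IsFixedPt]
    exact ((orbit_eq_orbit_iff.1 h).eq_of_left hfix).symm
  omega

theorem card_le_card_orbits_prod_add_length {L : List (Perm α)} (hL : ∀ τ ∈ L, τ.IsSwap) :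
    Fintype.card α ≤ #L.prod.orbits + L.length := by
  induction L with
  | nil => simp [card_orbits_one]
  | cons τ L ih =>
    obtain ⟨a, b, -, rfl⟩ := hL τ List.mem_cons_self
    have := ih fun τ hτ => hL τ (List.mem_cons_of_mem _ hτ)
    have := card_orbits_le_card_orbits_swap_mul_add_one L.prod a b
    simp only [List.prod_cons, List.length_cons]
    omega

theorem exists_isSwap_list_prod_eq_length_add_card_orbits (σ : Perm α) :
    ∃ L : List (Perm α), (∀ τ ∈ L, τ.IsSwap) ∧ L.prod = σ ∧
      L.length + #σ.orbits = Fintype.card α := by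
  by_cases hσ : σ = 1
  · subst hσ
    exact ⟨[], by simp, rfl, by simp [card_orbits_one]⟩
  obtain ⟨x, hx⟩ : ∃ x, σ x ≠ x := not_forall.1 fun h => hσ (Equiv.ext h)
  obtain ⟨L, hswap, hprod, hlen⟩ :=
    exists_isSwap_list_prod_eq_length_add_card_orbits (swap x (σ x) * σ)
  refine ⟨swap x (σ x) :: L, ?_, by rw [List.prod_cons, hprod, swap_mul_self_mul], ?_⟩
  · simp only [List.mem_cons, forall_eq_or_imp]
    exact ⟨⟨x, σ x, hx.symm, rfl⟩, hswap⟩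
  · rw [card_orbits_swap_apply_mul hx] at hlen
    simp only [List.length_cons]
    omega
termination_by #σ.support
decreasing_by exact card_support_swap_mul hx

theorem image_cycleOf_support (σ : Perm α) : σ.support.image σ.cycleOf = σ.cycleFactorsFinset := by
  ext c
  simp only [mem_image]
  constructor
  · rintro ⟨x, hx, rfl⟩
    exact cycleOf_mem_cycleFactorsFinset_iff.2 hx
  · intro hc
    obtain ⟨x, hx⟩ := (mem_cycleFactorsFinset_iff.1 hc).1.nonempty_support
    exact ⟨x, mem_cycleFactorsFinset_support_le hc hx, (cycle_is_cycleOf hx hc).symm⟩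

theorem card_orbits_eq_card_cycleType_add_card_fixedPoints (σ : Perm α) :
    #σ.orbits = σ.cycleType.card + #{x | σ x = x} := by
  have hsplit :
      σ.orbits = σ.support.image σ.orbit ∪ ({x | σ x = x} : Finset α).image σ.orbit := by
    rw [orbits, ← image_union]
    congr 1
    ext x
    simp only [mem_univ, mem_union, mem_support, mem_filter, true_and, ne_eq, em']
  have hdisj : _root_.Disjoint (σ.support.image σ.orbit)
      (({x | σ x = x} : Finset α).image σ.orbit) := by
    simp only [disjoint_left, mem_image, mem_support, mem_filter, mem_univ, true_and]
    rintro _ ⟨x, hx, rfl⟩ ⟨y, hy, hxy⟩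
    exact hx ((orbit_eq_orbit_iff.1 hxy).apply_eq_self_iff.1 hy)
  have hmoved : #(σ.support.image σ.orbit) = σ.cycleType.card := by
    rw [cycleType_def, Multiset.card_map, ← card_def, ← image_cycleOf_support]
    refine card_image_eq_card_image_of_eq_iff fun x hx y hy => ?_
    rw [orbit_eq_orbit_iff, sameCycle_iff_cycleOf_eq_of_mem_support hx hy]
  have hfixed : #(({x | σ x = x} : Finset α).image σ.orbit) = #{x | σ x = x} :=
    card_image_of_injOn fun x hx y _ h => (orbit_eq_orbit_iff.1 h).eq_of_left (mem_filter.1 hx).2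
  rw [hsplit, card_union_of_disjoint hdisj, hmoved, hfixed]

end Orbits

section Square

variable {α β : Type*}

theorem pow_apply_mem_iff_even {σ : Perm α} {S : Set α} (hS : ∀ x, σ x ∈ S ↔ x ∉ S)
    (x : α) (n : ℕ) :
    (σ ^ n) x ∈ S ↔ (x ∈ S ↔ Even n) := by
  induction n with
  | zero => simp
  | succ n ih =>
    rw [pow_succ', mul_apply, hS, ih, Nat.even_add_one]
    tauto

theorem pow_two_mul_apply_eq {σ : Perm α} {τ : Perm β} {f : β → α}
    (hτ : ∀ k, σ (σ (f k)) = f (τ k)) (n : ℕ) (k : β) :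
    (σ ^ (2 * n)) (f k) = f ((τ ^ n) k) := by
  induction n generalizing k with
  | zero => simp
  | succ n ih =>
    rw [mul_add, mul_one, pow_add, mul_apply, sq, mul_apply, hτ, ih, pow_succ, mul_apply]

theorem sameCycle_apply_iff_of_sq [Finite α] {σ : Perm α} {τ : Perm β} {f : β → α}
    (hf : Injective f)
    (hswap : ∀ x, σ x ∈ Set.range f ↔ x ∉ Set.range f) (hτ : ∀ k, σ (σ (f k)) = f (τ k))
    {k k' : β} : σ.SameCycle (f k) (f k') ↔ τ.SameCycle k k' := by
  have : Finite β := Finite.of_injective f hf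
  constructor
  · intro h
    obtain ⟨n, hn⟩ := h.exists_nat_pow_eq
    obtain ⟨m, rfl⟩ : Even n := by simpa [hn] using pow_apply_mem_iff_even hswap (f k) n
    rw [← two_mul, pow_two_mul_apply_eq hτ] at hn
    exact ⟨m, by rw [zpow_natCast]; exact hf hn⟩
  · intro h
    obtain ⟨n, hn⟩ := h.exists_nat_pow_eq
    exact ⟨(2 * n : ℕ), by rw [zpow_natCast, pow_two_mul_apply_eq hτ, hn]⟩

theorem card_orbits_eq_of_sq [Fintype α] [DecidableEq α] [Fintype β] [DecidableEq β]
    {σ : Perm α} {τ : Perm β} {f : β → α} (hf : Injective f)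
    (hswap : ∀ x, σ x ∈ Set.range f ↔ x ∉ Set.range f) (hτ : ∀ k, σ (σ (f k)) = f (τ k)) :
    #σ.orbits = #τ.orbits := by
  have hcover : σ.orbits = univ.image fun k => σ.orbit (f k) := by
    ext C
    simp only [orbits, mem_image, mem_univ, true_and]
    constructor
    · rintro ⟨x, rfl⟩
      by_cases hx : x ∈ Set.range f
      · obtain ⟨k, rfl⟩ := hx
        exact ⟨k, rfl⟩
      · obtain ⟨k, hk⟩ := (hswap x).2 hx
        exact ⟨k, orbit_eq_orbit_iff.2 (hk ▸ (SameCycle.refl σ x).apply_right).symm⟩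
    · rintro ⟨k, rfl⟩
      exact ⟨f k, rfl⟩
  rw [hcover, orbits]
  refine card_image_eq_card_image_of_eq_iff fun k _ k' _ => ?_
  rw [orbit_eq_orbit_iff, orbit_eq_orbit_iff, sameCycle_apply_iff_of_sq hf hswap hτ]

end Square

variable {N : ℕ}

theorem numCycles_eq_card_orbits (σ : Equiv.Perm (Fin N)) : numCycles σ = #σ.orbits :=
  σ.card_orbits_eq_card_cycleType_add_card_fixedPoints.symm

theorem transLength_add_card_orbits (σ : Equiv.Perm (Fin N)) :
    transLength σ + #σ.orbits = N := by
  obtain ⟨L, hswap, hprod, hlen⟩ := σ.exists_isSwap_list_prod_eq_length_add_card_orbits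
  rw [Fintype.card_fin] at hlen
  have hle : transLength σ ≤ L.length := Nat.sInf_le ⟨L, hswap, hprod, rfl⟩
  have hge : N - #σ.orbits ≤ transLength σ := by
    refine le_csInf ⟨L.length, L, hswap, hprod, rfl⟩ ?_
    rintro k ⟨M, hM, rfl, rfl⟩
    have := card_le_card_orbits_prod_add_length hM
    rw [Fintype.card_fin] at this
    omega
  omega

end Equiv.Perm

end

theorem numCycles_and_length_of_tilde_general (l : ℕ) (ε : Fin (2 * l) → ℤ)
    (hε : ∀ i, ε i = 1 ∨ ε i = -1)
    (p : Fin l → Fin (2 * l)) (hp : StrictMono p)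
    (hpr : Set.range p = {i | ε i = 1})
    (π : Equiv.Perm (Fin (2 * l))) (hπ : ∀ i, ε (π i) = -ε i)
    (πt : Equiv.Perm (Fin l)) (hπt : ∀ k, π (π (p k)) = p (πt k)) :
    numCycles π = numCycles πt ∧ transLength π = transLength πt + l := by
  have hswap : ∀ i, π i ∈ Set.range p ↔ i ∉ Set.range p := by
    intro i
    rw [hpr, Set.mem_ofPred_eq, Set.mem_ofPred_eq, hπ]
    rcases hε i with h | h <;> simp [h]
  have hcard := Equiv.Perm.card_orbits_eq_of_sq hp.injective hswap hπt
  have hπlen := Equiv.Perm.transLength_add_card_orbits π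
  have hπtlen := Equiv.Perm.transLength_add_card_orbits πt
  refine ⟨?_, by omega⟩
  rw [Equiv.Perm.numCycles_eq_card_orbits, Equiv.Perm.numCycles_eq_card_orbits, hcard]

theorem numCycles_and_length_of_tilde (l : ℕ) (ε : Fin (2 * l) → ℤ)
    (hε : ∀ i, ε i = 1 ∨ ε i = -1) (hsum : ∑ i, ε i = 0)
    (p q : Fin l → Fin (2 * l)) (hp : StrictMono p) (hq : StrictMono q)
    (hpr : Set.range p = {i | ε i = 1}) (hqr : Set.range q = {i | ε i = -1})
    (π : Equiv.Perm (Fin (2 * l))) (hπ : ∀ i, ε (π i) = -ε i)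
    (πt : Equiv.Perm (Fin l)) (hπt : ∀ k, π (π (p k)) = p (πt k)) :
    numCycles π = numCycles πt ∧ transLength π = transLength πt + l :=
  numCycles_and_length_of_tilde_general l ε hε p hp hpr π hπ πt hπt
end

section
/- Let m = |r|, n = |s| for nonzero integers r, s with r + s = 0, and let ε_i = sgn(r) for 1 ≤ i ≤ m and ε_i = sgn(s) for m+1 ≤ i ≤ m+n. Then every element of S^{(ε)}_{NC}(m,n) := S^{(ε)}_{m+n} ∩ S_{NC}(m,n) is a product of disjoint transpositions each pairing one element of {1,...,m} with one element of {m+1,...,m+n}, and the number of such elements is exactly n = |r|. -/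
/-!
A permutation exchanging the two circles has no fixed point, so it needs at least `n`
transpositions; as `γ` preserves the circles, `γ π⁻¹` exchanges them too. Hence
`|π| + |γ π⁻¹| = 2n` forces both to move `2n` points with `n` transpositions, which must then be
disjoint: both are involutions. So `π` conjugates `γ` to `γ⁻¹`, and is determined by the partner
`c` of the first point: it joins `i` to `c - i`. Conversely these `n` pairings all qualify.
-/

open Equiv Equiv.Perm Finset

section SwapProduct

variable {α : Type*} [DecidableEq α] [Fintype α]

theorem card_support_prod_le_of_isSwap {l : List (Perm α)} (hl : ∀ τ ∈ l, τ.IsSwap) :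
    #l.prod.support ≤ 2 * l.length := by
  induction l with
  | nil => simp
  | cons τ t ih =>
    obtain ⟨a, b, hab, rfl⟩ := hl τ List.mem_cons_self
    have ht := ih fun σ hσ => hl σ (List.mem_cons_of_mem _ hσ)
    calc #(swap a b * t.prod).support
        ≤ #((swap a b).support ∪ t.prod.support) := card_le_card (support_mul_le _ _)
      _ ≤ #(swap a b).support + #t.prod.support := card_union_le _ _
      _ ≤ 2 * (t.length + 1) := by rw [card_support_swap hab]; omega

theorem prod_mul_self_eq_one_of_card_support {l : List (Perm α)} (hl : ∀ τ ∈ l, τ.IsSwap)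
    (h : #l.prod.support = 2 * l.length) : l.prod * l.prod = 1 := by
  induction l with
  | nil => simp
  | cons τ t ih =>
    obtain ⟨a, b, hab, rfl⟩ := hl τ List.mem_cons_self
    have ht : ∀ σ ∈ t, σ.IsSwap := fun σ hσ => hl σ (List.mem_cons_of_mem _ hσ)
    rw [List.prod_cons, List.length_cons] at *
    have hsub : #(swap a b * t.prod).support ≤ #((swap a b).support ∪ t.prod.support) :=
      card_le_card (support_mul_le _ _)
    have hunion := card_union_add_card_inter (swap a b).support t.prod.support
    have hle := card_support_prod_le_of_isSwap ht
    rw [card_support_swap hab] at hunion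
    -- counting leaves no room for `swap a b` to meet the support of the rest of the product
    have hinter : #((swap a b).support ∩ t.prod.support) = 0 := by omega
    have hdisj : Disjoint (swap a b) t.prod := by
      rw [disjoint_iff_disjoint_support, disjoint_iff_inter_eq_empty, ← card_eq_zero, hinter]
    rw [hdisj.symm.commute.mul_mul_mul_comm, swap_mul_self, one_mul, ih ht (by omega)]

end SwapProduct

section TransLength

variable {N : ℕ}

theorem exists_isSwap_prod_eq_length_eq_transLength (π : Perm (Fin N)) :
    ∃ l : List (Perm (Fin N)), (∀ τ ∈ l, τ.IsSwap) ∧ l.prod = π ∧ l.length = transLength π := by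
  obtain ⟨l, hprod, hswap⟩ := (truncSwapFactors π).out
  exact Nat.sInf_mem (s := {k | ∃ l : List (Perm (Fin N)),
    (∀ τ ∈ l, τ.IsSwap) ∧ l.prod = π ∧ l.length = k}) ⟨l.length, l, hswap, hprod, rfl⟩

theorem transLength_prod_le {l : List (Perm (Fin N))} (hl : ∀ τ ∈ l, τ.IsSwap) :
    transLength l.prod ≤ l.length :=
  Nat.sInf_le ⟨l, hl, rfl, rfl⟩

theorem card_support_le_two_mul_transLength (π : Perm (Fin N)) :
    #π.support ≤ 2 * transLength π := by
  obtain ⟨l, hl, rfl, hlen⟩ := exists_isSwap_prod_eq_length_eq_transLength π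
  exact hlen ▸ card_support_prod_le_of_isSwap hl

theorem mul_self_eq_one_of_card_support_eq {π : Perm (Fin N)}
    (h : #π.support = 2 * transLength π) : π * π = 1 := by
  obtain ⟨l, hl, rfl, hlen⟩ := exists_isSwap_prod_eq_length_eq_transLength π
  exact prod_mul_self_eq_one_of_card_support hl (hlen ▸ h)

end TransLength

section Blocks

variable {N : ℕ}

def SwapsBlocks (m : ℕ) (π : Perm (Fin N)) : Prop :=
  ∀ i : Fin N, (i : ℕ) < m ↔ ¬ (π i : ℕ) < m

theorem swapsBlocks_iff_forall_sign_eq_neg {m : ℕ} {π : Perm (Fin N)} {a : ℤ} (ha : a ≠ 0) :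
    (∀ i, (fun i : Fin N => if (i : ℕ) < m then a else -a) (π i) =
        -(fun i : Fin N => if (i : ℕ) < m then a else -a) i) ↔ SwapsBlocks m π := by
  refine forall_congr' fun i => ?_
  by_cases hi : (i : ℕ) < m <;> by_cases hπi : (π i : ℕ) < m <;> simp [hi, hπi] <;> omega

theorem SwapsBlocks.support_eq_univ {m : ℕ} {π : Perm (Fin N)} (h : SwapsBlocks m π) :
    π.support = univ :=
  eq_univ_of_forall fun i => mem_support.mpr fun hi => iff_not_self (hi ▸ h i)

theorem SwapsBlocks.card_support {m : ℕ} {π : Perm (Fin N)} (h : SwapsBlocks m π) :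
    #π.support = N := by
  rw [h.support_eq_univ, card_univ, Fintype.card_fin]

end Blocks

section Gamma

open Fin.NatCast Fin.CommRing

variable {m n : ℕ}

theorem castAdd_ne_natAdd (i : Fin m) (j : Fin n) : Fin.castAdd n i ≠ Fin.natAdd m j :=
  Fin.ne_of_val_ne (by simp only [Fin.val_castAdd, Fin.val_natAdd]; omega)

theorem gammaMN_castAdd [NeZero m] (i : Fin m) :
    gammaMN m n (Fin.castAdd n i) = Fin.castAdd n (i + 1) := by
  simp [gammaMN, Equiv.permCongr_apply]

theorem gammaMN_natAdd [NeZero n] (j : Fin n) :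
    gammaMN m n (Fin.natAdd m j) = Fin.natAdd m (j + 1) := by
  simp [gammaMN, Equiv.permCongr_apply]

theorem gammaMN_pow_castAdd [NeZero m] (t : ℕ) (i : Fin m) :
    (gammaMN m n ^ t) (Fin.castAdd n i) = Fin.castAdd n (i + (t : Fin m)) := by
  induction t with
  | zero => simp
  | succ t ih => rw [pow_succ', Perm.mul_apply, ih, gammaMN_castAdd, Nat.cast_succ, add_assoc]

theorem gammaMN_pow_natAdd [NeZero n] (t : ℕ) (j : Fin n) :
    (gammaMN m n ^ t) (Fin.natAdd m j) = Fin.natAdd m (j + (t : Fin n)) := by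
  induction t with
  | zero => simp
  | succ t ih => rw [pow_succ', Perm.mul_apply, ih, gammaMN_natAdd, Nat.cast_succ, add_assoc]

theorem val_gammaMN_lt_iff (x : Fin (m + n)) : (gammaMN m n x : ℕ) < m ↔ (x : ℕ) < m := by
  induction x using Fin.addCases with
  | left i =>
    have := i.neZero
    simp [gammaMN_castAdd]
  | right j =>
    have := j.neZero
    simp [gammaMN_natAdd]

theorem SwapsBlocks.gammaMN_mul_inv {π : Perm (Fin (m + n))} (h : SwapsBlocks m π) :
    SwapsBlocks m (gammaMN m n * π⁻¹) := by
  intro x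
  have hx := h (π⁻¹ x)
  rw [← Perm.mul_apply, mul_inv_cancel, Perm.one_apply] at hx
  rw [Perm.mul_apply, val_gammaMN_lt_iff]
  tauto

end Gamma

section AnnularPairing

open Fin.NatCast Fin.CommRing

variable {n : ℕ} [NeZero n]

/-- The non-crossing pairing joining point `i` of the outer circle (`Fin.castAdd`) to point `c - i`
of the inner one (`Fin.natAdd`). -/
def annularPairing (c : Fin n) : Perm (Fin (n + n)) :=
  finSumFinEquiv.permCongr
    (((Equiv.subLeft c).sumCongr (Equiv.subLeft c)).trans (Equiv.sumComm _ _))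

@[simp]
theorem annularPairing_castAdd (c i : Fin n) :
    annularPairing c (Fin.castAdd n i) = Fin.natAdd n (c - i) := by
  simp [annularPairing, Equiv.permCongr_apply]

@[simp]
theorem annularPairing_natAdd (c j : Fin n) :
    annularPairing c (Fin.natAdd n j) = Fin.castAdd n (c - j) := by
  simp only [annularPairing, Equiv.permCongr_apply, finSumFinEquiv_symm_apply_natAdd,
    Equiv.trans_apply, Equiv.sumCongr_apply, Sum.map_inr, Equiv.sumComm_apply, Sum.swap_inr,
    Equiv.subLeft_apply, finSumFinEquiv_apply_left]

theorem annularPairing_mul_self (c : Fin n) : annularPairing c * annularPairing c = 1 := by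
  ext x : 1
  induction x using Fin.addCases <;>
    simp only [Perm.mul_apply, annularPairing_castAdd, annularPairing_natAdd, sub_sub_cancel,
      Perm.one_apply]

theorem swapsBlocks_annularPairing (c : Fin n) : SwapsBlocks n (annularPairing c) := by
  intro x
  induction x using Fin.addCases <;>
    simp only [annularPairing_castAdd, annularPairing_natAdd, Fin.val_castAdd, Fin.val_natAdd] <;>
    omega

theorem gammaMN_mul_annularPairing (c : Fin n) :
    gammaMN n n * annularPairing c = annularPairing (c + 1) := by
  ext x : 1
  induction x using Fin.addCases <;>
    simp only [Perm.mul_apply, annularPairing_castAdd, annularPairing_natAdd, gammaMN_castAdd,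
      gammaMN_natAdd, sub_add_eq_add_sub]

theorem annularPairing_injective : Function.Injective (annularPairing (n := n)) := by
  intro c c' h
  simpa using congr(($h) (Fin.castAdd n 0))

theorem connected_annularPairing (c : Fin n) : Connected (annularPairing c) := by
  set H := Subgroup.closure ({annularPairing c, gammaMN n n} : Set (Perm (Fin (n + n))))
  have hγ : gammaMN n n ∈ H := Subgroup.subset_closure (by simp)
  have hπ : annularPairing c ∈ H := Subgroup.subset_closure (by simp)
  have reach (x : Fin (n + n)) : ∃ g ∈ H, g (Fin.castAdd n 0) = x := by
    induction x using Fin.addCases with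
    | left i => exact ⟨gammaMN n n ^ (i : ℕ), pow_mem hγ _, by simp [gammaMN_pow_castAdd]⟩
    | right j =>
      refine ⟨annularPairing c * gammaMN n n ^ ((c - j : Fin n) : ℕ),
        mul_mem hπ (pow_mem hγ _), ?_⟩
      simp [gammaMN_pow_castAdd]
  intro x y
  obtain ⟨g, hg, rfl⟩ := reach x
  obtain ⟨g', hg', rfl⟩ := reach y
  exact ⟨g' * g⁻¹, mul_mem hg' (inv_mem hg), by simp⟩

def annularSwaps (c : Fin n) : List (Perm (Fin (n + n))) :=
  List.ofFn fun i : Fin n => swap (Fin.castAdd n i) (Fin.natAdd n (c - i))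

theorem pairwise_disjoint_annularSwaps (c : Fin n) : (annularSwaps c).Pairwise Disjoint := by
  rw [annularSwaps, List.pairwise_ofFn]
  intro i j hij
  have hne : c - i ≠ c - j := sub_right_injective.ne hij.ne
  rw [disjoint_iff_disjoint_support, support_swap (castAdd_ne_natAdd _ _),
    support_swap (castAdd_ne_natAdd _ _)]
  simp only [disjoint_insert_left, disjoint_singleton_left, mem_insert, mem_singleton,
    Fin.castAdd_inj, Fin.natAdd_inj, castAdd_ne_natAdd, (castAdd_ne_natAdd _ _).symm, hij.ne,
    hne, or_self, not_false_eq_true, and_self]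

theorem prod_annularSwaps (c : Fin n) : (annularSwaps c).prod = annularPairing c := by
  have hmem (i : Fin n) : swap (Fin.castAdd n i) (Fin.natAdd n (c - i)) ∈ annularSwaps c :=
    List.mem_ofFn.mpr ⟨i, rfl⟩
  have hprod (i : Fin n) := eq_on_support_mem_disjoint (hmem i) (pairwise_disjoint_annularSwaps c)
  ext x : 1
  induction x using Fin.addCases with
  | left i =>
    rw [← hprod i _ (support_swap (castAdd_ne_natAdd _ _) ▸ mem_insert_self _ _),
      swap_apply_left, annularPairing_castAdd]
  | right j =>
    have h := hprod (c - j)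
    rw [sub_sub_cancel] at h
    rw [← h _ (support_swap (castAdd_ne_natAdd _ _) ▸ mem_insert_of_mem (mem_singleton_self _)),
      swap_apply_right, annularPairing_natAdd]

theorem transLength_annularPairing (c : Fin n) : transLength (annularPairing c) = n := by
  have hswap (τ) (hτ : τ ∈ annularSwaps c) : τ.IsSwap := by
    obtain ⟨i, rfl⟩ := List.mem_ofFn.mp hτ
    exact ⟨_, _, castAdd_ne_natAdd _ _, rfl⟩
  have hle := transLength_prod_le hswap
  have hge := card_support_le_two_mul_transLength (annularPairing c)
  rw [prod_annularSwaps, annularSwaps, List.length_ofFn] at hle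
  rw [(swapsBlocks_annularPairing c).card_support] at hge
  omega

theorem exists_annularPairing_eq {π : Perm (Fin (n + n))} (hπ : SwapsBlocks n π)
    (hinv : π * π = 1) (hγ : SemiconjBy π (gammaMN n n) (gammaMN n n)⁻¹) :
    ∃ c, annularPairing c = π := by
  obtain ⟨c, hc⟩ : ∃ c, π (Fin.castAdd n 0) = Fin.natAdd n c := by
    have h0 := (hπ (Fin.castAdd n 0)).mp (by simp [Nat.pos_of_neZero])
    cases hx : π (Fin.castAdd n 0) using Fin.addCases with
    | left i => simp [hx] at h0
    | right j => exact ⟨j, rfl⟩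
  have hleft (i : Fin n) : π (Fin.castAdd n i) = Fin.natAdd n (c - i) := by
    have h := congr(($(hγ.pow_right (i : ℕ))) (Fin.castAdd n 0))
    rw [Perm.mul_apply, gammaMN_pow_castAdd, zero_add, Fin.cast_val_eq_self, Perm.mul_apply, hc,
      inv_pow] at h
    rw [h, Perm.inv_eq_iff_eq, gammaMN_pow_natAdd, Fin.cast_val_eq_self, sub_add_cancel]
  refine ⟨c, Equiv.ext fun x => ?_⟩
  induction x using Fin.addCases with
  | left i => rw [annularPairing_castAdd, hleft]
  | right j =>
    have h := hleft (c - j)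
    rw [sub_sub_cancel] at h
    rw [annularPairing_natAdd, ← h, ← Perm.mul_apply, hinv, Perm.one_apply]

theorem exists_annularPairing_eq_of_transLength_add {π : Perm (Fin (n + n))}
    (hπ : SwapsBlocks n π) (h : transLength π + transLength (gammaMN n n * π⁻¹) = n + n) :
    ∃ c, annularPairing c = π := by
  have hσ := hπ.gammaMN_mul_inv
  have hπ_le := card_support_le_two_mul_transLength π
  have hσ_le := card_support_le_two_mul_transLength (gammaMN n n * π⁻¹)
  rw [hπ.card_support] at hπ_le
  rw [hσ.card_support] at hσ_le
  have hπ2 : π * π = 1 := mul_self_eq_one_of_card_support_eq (by rw [hπ.card_support]; omega)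
  have hσ2 := mul_self_eq_one_of_card_support_eq (by rw [hσ.card_support]; omega)
  rw [inv_eq_of_mul_eq_one_right hπ2] at hσ2
  refine exists_annularPairing_eq hπ hπ2 ?_
  calc π * gammaMN n n
      = (gammaMN n n)⁻¹ * (gammaMN n n * π * (gammaMN n n * π)) * π⁻¹ := by group
    _ = (gammaMN n n)⁻¹ * π := by rw [hσ2, mul_one, inv_eq_of_mul_eq_one_right hπ2]

theorem setOf_swapsBlocks_connected_transLength_eq_range :
    {π : Perm (Fin (n + n)) | SwapsBlocks n π ∧ Connected π ∧
      transLength π + transLength (gammaMN n n * π⁻¹) = n + n} = Set.range annularPairing := by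
  ext π
  constructor
  · rintro ⟨hπ, -, h⟩
    exact exists_annularPairing_eq_of_transLength_add hπ h
  · rintro ⟨c, rfl⟩
    refine ⟨swapsBlocks_annularPairing c, connected_annularPairing c, ?_⟩
    rw [inv_eq_of_mul_eq_one_right (annularPairing_mul_self c), gammaMN_mul_annularPairing,
      transLength_annularPairing, transLength_annularPairing]

end AnnularPairing

theorem annular_pairings_of_signs_general (r s : ℤ) (hr : r ≠ 0) (hrs : r + s = 0) :
    ∀ m n : ℕ, m = r.natAbs → n = s.natAbs →
    ∀ ε : Fin (m + n) → ℤ,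
      (ε = fun i : Fin (m + n) => if (i : ℕ) < m then Int.sign r else Int.sign s) →
    ∀ S : Set (Equiv.Perm (Fin (m + n))),
      S = {π | (∀ i, ε (π i) = -ε i) ∧ Connected π ∧
            transLength π + transLength (gammaMN m n * π⁻¹) = m + n} →
    (∀ π ∈ S, (∀ i, π (π i) = i) ∧
        (∀ i : Fin (m + n), (i : ℕ) < m ↔ ¬ ((π i : ℕ) < m))) ∧
      S.ncard = r.natAbs := by
  intro m n hm hn ε hε S hS
  have hsr : s = -r := by omega
  obtain rfl : n = m := by rw [hn, hm, hsr, Int.natAbs_neg]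
  have : NeZero n := ⟨by rw [hm]; exact Int.natAbs_ne_zero.mpr hr⟩
  have hS_range : S = Set.range annularPairing := by
    rw [hS, hε, hsr, Int.sign_neg, ← setOf_swapsBlocks_connected_transLength_eq_range]
    simp_rw [swapsBlocks_iff_forall_sign_eq_neg (mt Int.sign_eq_zero_iff_zero.mp hr)]
  subst hS_range
  refine ⟨?_, ?_⟩
  · rintro _ ⟨c, rfl⟩
    exact ⟨fun i => congr(($(annularPairing_mul_self c)) i), swapsBlocks_annularPairing c⟩
  · rw [Set.ncard_range_of_injective annularPairing_injective, Nat.card_eq_fintype_card,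
      Fintype.card_fin, hm]

theorem annular_pairings_of_signs (r s : ℤ) (hr : r ≠ 0) (hs : s ≠ 0) (hrs : r + s = 0) :
    ∀ m n : ℕ, m = r.natAbs → n = s.natAbs →
    ∀ ε : Fin (m + n) → ℤ,
      (ε = fun i : Fin (m + n) => if (i : ℕ) < m then Int.sign r else Int.sign s) →
    ∀ S : Set (Equiv.Perm (Fin (m + n))),
      S = {π | (∀ i, ε (π i) = -ε i) ∧ Connected π ∧
            transLength π + transLength (gammaMN m n * π⁻¹) = m + n} →
    (∀ π ∈ S, (∀ i, π (π i) = i) ∧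
        (∀ i : Fin (m + n), (i : ℕ) < m ↔ ¬ ((π i : ℕ) < m))) ∧
      S.ncard = r.natAbs :=
  annular_pairings_of_signs_general r s hr hrs
end
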